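/- For all real numbers R ≥ ε > 0, ν > 0, and t ∈ [0, ν]: e^{νε}·cosh((R−ε)t) ≥ cosh(Rt). -/

import Mathlib

open Real

/-- Both exponentials in `cosh (x + y)` grow by at most the factor `exp |y|`. -/
theorem Real.cosh_add_le_cosh_mul_exp_abs (x y : ℝ) : cosh (x + y) ≤ cosh x * exp |y| := by
  have hpos : exp (x + y) ≤ exp x * exp |y| := by
    rw [← exp_add]; exact exp_le_exp.mpr (by linarith [le_abs_self y])
  have hneg : exp (-(x + y)) ≤ exp (-x) * exp |y| := by
    rw [← exp_add]; exact exp_le_exp.mpr (by linarith [neg_le_abs y])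
  rw [cosh_eq, cosh_eq]
  linarith

theorem stmt_7_general (R ε ν t : ℝ) (hε : 0 < ε)
    (ht0 : 0 ≤ t) (htν : t ≤ ν) :
    Real.cosh (R * t) ≤ Real.exp (ν * ε) * Real.cosh ((R - ε) * t) := by
  have hshift : ε * t ≤ ν * ε := by nlinarith
  calc cosh (R * t) = cosh ((R - ε) * t + ε * t) := by ring_nf
    _ ≤ cosh ((R - ε) * t) * exp |ε * t| := cosh_add_le_cosh_mul_exp_abs _ _
    _ ≤ cosh ((R - ε) * t) * exp (ν * ε) := by
      rw [abs_of_nonneg (by positivity)]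
      gcongr
    _ = exp (ν * ε) * cosh ((R - ε) * t) := mul_comm _ _

theorem stmt_7 (R ε ν t : ℝ) (hε : 0 < ε) (hR : ε ≤ R) (hν : 0 < ν)
    (ht0 : 0 ≤ t) (htν : t ≤ ν) :
    Real.cosh (R * t) ≤ Real.exp (ν * ε) * Real.cosh ((R - ε) * t) :=
  stmt_7_general R ε ν t hε ht0 htν
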